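/- Let (M, N) be a perfect duality pair over a ring R. Then M is closed under direct limits, and consequently every flat left R-module belongs to M. -/

import Mathlib

set_option linter.unusedVariables false
set_option linter.unusedSectionVars false

open MulOpposite CategoryTheory

open MulOpposite

noncomputable section

section BT
variable (R : Type) [Ring R] (M : Type) [AddCommGroup M] [Module Rᵐᵒᵖ M]
  (N : Type) [AddCommGroup N] [Module R N]

def btRel : Submodule ℤ (TensorProduct ℤ M N) :=
  Submodule.span ℤ {x | ∃ (m : M) (r : R) (n : N),
    x = (op r • m) ⊗ₜ[ℤ] n - m ⊗ₜ[ℤ] (r • n)}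

def BT : Type := TensorProduct ℤ M N ⧸ btRel R M N

instance : AddCommGroup (BT R M N) :=
  inferInstanceAs (AddCommGroup (TensorProduct ℤ M N ⧸ btRel R M N))

variable {M N}

def BT.mk (m : M) (n : N) : BT R M N :=
  Submodule.Quotient.mk (m ⊗ₜ[ℤ] n)

variable {R}

theorem BT.mk_rel (m : M) (r : R) (n : N) : BT.mk R (op r • m) n = BT.mk R m (r • n) := by
  rw [BT.mk, BT.mk]
  show (Submodule.Quotient.mk _ : TensorProduct ℤ M N ⧸ btRel R M N) = Submodule.Quotient.mk _
  rw [Submodule.Quotient.eq]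
  exact Submodule.subset_span ⟨m, r, n, rfl⟩

theorem BT.mk_add_left (m m' : M) (n : N) :
    BT.mk R (m + m') n = BT.mk R m n + BT.mk R m' n := by
  have h : (Submodule.Quotient.mk ((m + m') ⊗ₜ[ℤ] n) : TensorProduct ℤ M N ⧸ btRel R M N) =
      Submodule.Quotient.mk (m ⊗ₜ[ℤ] n) + Submodule.Quotient.mk (m' ⊗ₜ[ℤ] n) := by
    rw [← Submodule.Quotient.mk_add, TensorProduct.add_tmul]
  exact h

theorem BT.mk_add_right (m : M) (n n' : N) :
    BT.mk R m (n + n') = BT.mk R m n + BT.mk R m n' := by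
  have h : (Submodule.Quotient.mk (m ⊗ₜ[ℤ] (n + n')) : TensorProduct ℤ M N ⧸ btRel R M N) =
      Submodule.Quotient.mk (m ⊗ₜ[ℤ] n) + Submodule.Quotient.mk (m ⊗ₜ[ℤ] n') := by
    rw [← Submodule.Quotient.mk_add, TensorProduct.tmul_add]
  exact h

theorem BT.mk_zero_left (n : N) : BT.mk R (0 : M) n = 0 := by
  rw [BT.mk, TensorProduct.zero_tmul]; rfl

theorem BT.mk_zero_right (m : M) : BT.mk R m (0 : N) = 0 := by
  rw [BT.mk, TensorProduct.tmul_zero]; rfl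

theorem BT.ind {P : BT R M N → Prop} (h0 : P 0) (hmk : ∀ m n, P (BT.mk R m n))
    (hadd : ∀ x y, P x → P y → P (x + y)) : ∀ x, P x := by
  intro x
  obtain ⟨y, rfl⟩ := Submodule.Quotient.mk_surjective (btRel R M N) x
  induction y using TensorProduct.induction_on with
  | zero => exact h0
  | tmul m n => exact hmk m n
  | add a b ha hb => rw [Submodule.Quotient.mk_add]; exact hadd _ _ ha hb

theorem BT.hom_ext {X : Type} [AddCommGroup X] {f g : BT R M N →ₗ[ℤ] X}
    (h : ∀ m n, f (BT.mk R m n) = g (BT.mk R m n)) : f = g :=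
  LinearMap.ext fun x => BT.ind (P := fun y => f y = g y) (by simp) h
    (fun a b ha hb => by
      show f (a + b) = g (a + b)
      rw [map_add, map_add]
      exact congrArg₂ (· + ·) ha hb) x

/-- Functoriality of the balanced tensor product in the right variable. -/
def BT.map (R : Type) [Ring R] {M : Type} [AddCommGroup M] [Module Rᵐᵒᵖ M]
    {N N' : Type} [AddCommGroup N] [Module R N] [AddCommGroup N'] [Module R N']
    (f : N →ₗ[R] N') : BT R M N →ₗ[ℤ] BT R M N' := by
  refine Submodule.mapQ _ _
    (TensorProduct.map LinearMap.id f.toAddMonoidHom.toIntLinearMap) ?_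
  rw [btRel, Submodule.span_le]
  rintro x ⟨m, r, n, rfl⟩
  simp only [SetLike.mem_coe, Submodule.mem_comap, map_sub, TensorProduct.map_tmul,
    LinearMap.id_apply, AddMonoidHom.coe_toIntLinearMap, LinearMap.toAddMonoidHom_coe,
    map_smul]
  refine Submodule.subset_span ⟨m, r, f n, ?_⟩
  erw [map_sub, TensorProduct.map_tmul, TensorProduct.map_tmul]
  simp

@[simp] theorem BT.map_mk (R : Type) [Ring R] {M : Type} [AddCommGroup M] [Module Rᵐᵒᵖ M]
    {N N' : Type} [AddCommGroup N] [Module R N] [AddCommGroup N'] [Module R N']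
    (f : N →ₗ[R] N') (m : M) (n : N) : BT.map R f (BT.mk R m n) = BT.mk R m (f n) := rfl

section lsmul
variable (T : Type) [Ring T] [Module T M] [SMulCommClass T Rᵐᵒᵖ M]

/-- action of an auxiliary ring `T` on `M ⊗_R N` through the left factor. -/
def BT.lsmul (t : T) : BT R M N →ₗ[ℤ] BT R M N := by
  refine Submodule.mapQ _ _
    (TensorProduct.map (DistribMulAction.toAddMonoidHom M t).toIntLinearMap LinearMap.id) ?_
  rw [btRel, Submodule.span_le]
  rintro x ⟨m, r, n, rfl⟩
  simp only [SetLike.mem_coe, Submodule.mem_comap, map_sub, TensorProduct.map_tmul,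
    LinearMap.id_apply, AddMonoidHom.coe_toIntLinearMap, DistribMulAction.toAddMonoidHom_apply]
  refine Submodule.subset_span ⟨t • m, r, n, ?_⟩
  erw [map_sub, TensorProduct.map_tmul, TensorProduct.map_tmul]
  simp [smul_comm t (op r) m]

@[simp] theorem BT.lsmul_mk (t : T) (m : M) (n : N) :
    BT.lsmul T t (BT.mk R m n) = BT.mk R (t • m) n := rfl

theorem BT.lsmul_one : BT.lsmul (R := R) (M := M) (N := N) T 1 = LinearMap.id :=
  BT.hom_ext fun m n => by simp

theorem BT.lsmul_mul (t t' : T) :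
    BT.lsmul (R := R) (M := M) (N := N) T (t * t') = (BT.lsmul T t).comp (BT.lsmul T t') :=
  BT.hom_ext fun m n => by simp [mul_smul]

theorem BT.lsmul_add (t t' : T) :
    BT.lsmul (R := R) (M := M) (N := N) T (t + t') = BT.lsmul T t + BT.lsmul T t' :=
  BT.hom_ext fun m n => by simp [add_smul, BT.mk_add_left]

theorem BT.lsmul_zero : BT.lsmul (R := R) (M := M) (N := N) T 0 = 0 :=
  BT.hom_ext fun m n => by simp [BT.mk_zero_left]

/-- The left auxiliary module structure on the balanced tensor product. -/
instance (priority := 100) BT.instLModule : Module T (BT R M N) where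
  smul t x := BT.lsmul T t x
  one_smul x := by show BT.lsmul T 1 x = x; rw [BT.lsmul_one]; rfl
  mul_smul t t' x := by
    show BT.lsmul T (t * t') x = BT.lsmul T t (BT.lsmul T t' x)
    rw [BT.lsmul_mul]; rfl
  smul_zero t := map_zero (BT.lsmul T t)
  smul_add t x y := map_add (BT.lsmul T t) x y
  add_smul t t' x := by
    show BT.lsmul T (t + t') x = BT.lsmul T t x + BT.lsmul T t' x
    rw [BT.lsmul_add]; rfl
  zero_smul x := by show BT.lsmul T 0 x = 0; rw [BT.lsmul_zero]; rfl

theorem BT.smul_mk (t : T) (m : M) (n : N) :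
    t • (BT.mk R m n) = BT.mk R (t • m) n := BT.lsmul_mk T t m n

end lsmul

section rsmul
variable (T : Type) [Ring T] [Module T N] [SMulCommClass T R N]

/-- action of an auxiliary ring `T` on `M ⊗_R N` through the right factor. -/
def BT.rsmul (t : T) : BT R M N →ₗ[ℤ] BT R M N := by
  refine Submodule.mapQ _ _
    (TensorProduct.map LinearMap.id (DistribMulAction.toAddMonoidHom N t).toIntLinearMap) ?_
  rw [btRel, Submodule.span_le]
  rintro x ⟨m, r, n, rfl⟩
  simp only [SetLike.mem_coe, Submodule.mem_comap, map_sub, TensorProduct.map_tmul,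
    LinearMap.id_apply, AddMonoidHom.coe_toIntLinearMap, DistribMulAction.toAddMonoidHom_apply]
  refine Submodule.subset_span ⟨m, r, t • n, ?_⟩
  erw [map_sub, TensorProduct.map_tmul, TensorProduct.map_tmul]
  simp [smul_comm t r n]

@[simp] theorem BT.rsmul_mk (t : T) (m : M) (n : N) :
    BT.rsmul T t (BT.mk R m n) = BT.mk R m (t • n) := rfl

theorem BT.rsmul_one : BT.rsmul (R := R) (M := M) (N := N) T 1 = LinearMap.id :=
  BT.hom_ext fun m n => by simp

theorem BT.rsmul_mul (t t' : T) :
    BT.rsmul (R := R) (M := M) (N := N) T (t * t') = (BT.rsmul T t).comp (BT.rsmul T t') :=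
  BT.hom_ext fun m n => by simp [mul_smul]

theorem BT.rsmul_add (t t' : T) :
    BT.rsmul (R := R) (M := M) (N := N) T (t + t') = BT.rsmul T t + BT.rsmul T t' :=
  BT.hom_ext fun m n => by simp [add_smul, BT.mk_add_right]

theorem BT.rsmul_zero : BT.rsmul (R := R) (M := M) (N := N) T 0 = 0 :=
  BT.hom_ext fun m n => by simp [BT.mk_zero_right]

/-- The right auxiliary module structure on the balanced tensor product. -/
instance (priority := 90) BT.instRModule : Module T (BT R M N) where
  smul t x := BT.rsmul T t x
  one_smul x := by show BT.rsmul T 1 x = x; rw [BT.rsmul_one]; rfl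
  mul_smul t t' x := by
    show BT.rsmul T (t * t') x = BT.rsmul T t (BT.rsmul T t' x)
    rw [BT.rsmul_mul]; rfl
  smul_zero t := map_zero (BT.rsmul T t)
  smul_add t x y := map_add (BT.rsmul T t) x y
  add_smul t t' x := by
    show BT.rsmul T (t + t') x = BT.rsmul T t x + BT.rsmul T t' x
    rw [BT.rsmul_add]; rfl
  zero_smul x := by show BT.rsmul T 0 x = 0; rw [BT.rsmul_zero]; rfl

theorem BT.smul_mk_right (t : T) (m : M) (n : N) :
    t • (BT.mk R m n) = BT.mk R m (t • n) := BT.rsmul_mk T t m n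

end rsmul
end BT
end


noncomputable section

set_option linter.unusedSectionVars false

/-! ### Hom-module structures -/

section HomMod
variable (R S : Type) [Ring R] [Ring S]
variable (C : Type) [AddCommGroup C] [Module S C] [Module Rᵐᵒᵖ C] [SMulCommClass S Rᵐᵒᵖ C]

/-- For an `(S,R)`-bimodule `C` and a left `S`-module `X`, the abelian group
`Hom_S(C,X)` is a left `R`-module via `(r • f) c = f (c • r)`. -/
instance homLeftModule (X : Type) [AddCommGroup X] [Module S X] :
    Module R (C →ₗ[S] X) where
  smul r f :=
    { toFun := fun c => f (op r • c)
      map_add' := fun c c' => by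
        show f (op r • (c + c')) = f (op r • c) + f (op r • c')
        rw [smul_add, map_add]
      map_smul' := fun s c => by
        show f (op r • s • c) = s • f (op r • c)
        rw [← smul_comm s (op r) c, map_smul] }
  one_smul f := LinearMap.ext fun c => by
    show f (op (1 : R) • c) = f c
    rw [op_one, one_smul]
  mul_smul r r' f := LinearMap.ext fun c => by
    show f (op (r * r') • c) = f (op r' • op r • c)
    rw [← mul_smul, ← op_mul]
  smul_add r f g := rfl
  smul_zero r := rfl
  add_smul r r' f := LinearMap.ext fun c => by
    show f (op (r + r') • c) = f (op r • c) + f (op r' • c)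
    rw [← map_add, MulOpposite.op_add, add_smul]
  zero_smul f := LinearMap.ext fun c => by
    show f (op (0 : R) • c) = 0
    rw [op_zero, zero_smul, map_zero]

theorem homLeftModule_smul_apply (X : Type) [AddCommGroup X] [Module S X]
    (r : R) (f : C →ₗ[S] X) (c : C) : (r • f) c = f (op r • c) := rfl

/-- For an `(S,R)`-bimodule `C` and a right `R`-module `Y`, the abelian group
`Hom_{Rᵒᵖ}(C,Y)` is a right `S`-module via `(f • s) c = f (s • c)`. -/
instance homRightModule (Y : Type) [AddCommGroup Y] [Module Rᵐᵒᵖ Y] :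
    Module Sᵐᵒᵖ (C →ₗ[Rᵐᵒᵖ] Y) where
  smul s f :=
    { toFun := fun c => f (s.unop • c)
      map_add' := fun c c' => by
        show f (s.unop • (c + c')) = f (s.unop • c) + f (s.unop • c')
        rw [smul_add, map_add]
      map_smul' := fun r c => by
        show f (s.unop • r • c) = r • f (s.unop • c)
        rw [smul_comm s.unop r c, map_smul] }
  one_smul f := LinearMap.ext fun c => by
    show f ((1 : Sᵐᵒᵖ).unop • c) = f c
    rw [unop_one, one_smul]
  mul_smul s s' f := LinearMap.ext fun c => by
    show f ((s * s').unop • c) = f (s'.unop • s.unop • c)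
    rw [unop_mul, mul_smul]
  smul_add s f g := rfl
  smul_zero s := rfl
  add_smul s s' f := LinearMap.ext fun c => by
    show f ((s + s').unop • c) = f (s.unop • c) + f (s'.unop • c)
    rw [← map_add, MulOpposite.unop_add, add_smul]
  zero_smul f := LinearMap.ext fun c => by
    show f ((0 : Sᵐᵒᵖ).unop • c) = 0
    rw [unop_zero, zero_smul, map_zero]

theorem homRightModule_smul_apply (Y : Type) [AddCommGroup Y] [Module Rᵐᵒᵖ Y]
    (s : Sᵐᵒᵖ) (f : C →ₗ[Rᵐᵒᵖ] Y) (c : C) : (s • f) c = f (s.unop • c) := rfl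

end HomMod

/-! ### Character modules of one-sided modules -/

section Char
variable (R : Type) [Ring R] (M : Type) [AddCommGroup M]

/-- The character module of a left module is a right module. -/
instance instCharRight [Module R M] : Module Rᵐᵒᵖ (CharacterModule M) where
  smul r f := f.comp (DistribMulAction.toAddMonoidHom M r.unop)
  one_smul f := DFunLike.ext _ _ fun a => by
    show f ((1 : Rᵐᵒᵖ).unop • a) = f a
    rw [unop_one, one_smul]
  mul_smul r r' f := DFunLike.ext _ _ fun a => by
    show f ((r * r').unop • a) = f (r'.unop • r.unop • a)
    rw [unop_mul, mul_smul]
  smul_add r f g := rfl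
  smul_zero r := rfl
  add_smul r r' f := DFunLike.ext _ _ fun a => by
    show f ((r + r').unop • a) = f (r.unop • a) + f (r'.unop • a)
    rw [← map_add, MulOpposite.unop_add, add_smul]
  zero_smul f := DFunLike.ext _ _ fun a => by
    show f ((0 : Rᵐᵒᵖ).unop • a) = 0
    rw [unop_zero, zero_smul, map_zero]

theorem instCharRight_smul_apply [Module R M] (r : Rᵐᵒᵖ) (f : CharacterModule M) (a : M) :
    (r • f) a = f (r.unop • a) := rfl

/-- The character module of a right module is a left module. -/
instance instCharLeft [Module Rᵐᵒᵖ M] : Module R (CharacterModule M) where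
  smul r f := f.comp (DistribMulAction.toAddMonoidHom M (op r))
  one_smul f := DFunLike.ext _ _ fun a => by
    show f (op (1 : R) • a) = f a
    rw [op_one, one_smul]
  mul_smul r r' f := DFunLike.ext _ _ fun a => by
    show f (op (r * r') • a) = f (op r' • op r • a)
    rw [← mul_smul, ← op_mul]
  smul_add r f g := rfl
  smul_zero r := rfl
  add_smul r r' f := DFunLike.ext _ _ fun a => by
    show f (op (r + r') • a) = f (op r • a) + f (op r' • a)
    rw [← map_add, MulOpposite.op_add, add_smul]
  zero_smul f := DFunLike.ext _ _ fun a => by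
    show f (op (0 : R) • a) = 0
    rw [op_zero, zero_smul, map_zero]

theorem instCharLeft_smul_apply [Module Rᵐᵒᵖ M] (r : R) (f : CharacterModule M) (a : M) :
    (r • f) a = f (op r • a) := rfl

end Char
end

noncomputable section
section TorExt

/-- Tensoring with a fixed right `R`-module `M`, as a functor on left `R`-modules. -/
def btF (R : Type) [Ring R] (M : Type) [AddCommGroup M] [Module Rᵐᵒᵖ M] :
    ModuleCat.{0} R ⥤ AddCommGrpCat.{0} where
  obj N := AddCommGrpCat.of (BT R M N)
  map f := AddCommGrpCat.ofHom (BT.map R f.hom).toAddMonoidHom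
  map_id N := by
    have h : BT.map (M := M) R (LinearMap.id : ↥N →ₗ[R] ↥N) = LinearMap.id :=
      BT.hom_ext fun m n => by simp
    ext x
    show BT.map (M := M) R (LinearMap.id : ↥N →ₗ[R] ↥N) x = x
    rw [h]; rfl
  map_comp {X Y Z} f g := by
    have h : BT.map (M := M) R (LinearMap.comp g.hom f.hom)
        = (BT.map R g.hom).comp (BT.map R f.hom) :=
      BT.hom_ext fun m n => by simp
    ext x
    show BT.map (M := M) R (LinearMap.comp g.hom f.hom) x
      = BT.map R g.hom (BT.map R f.hom x)
    rw [h]; rfl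

instance btF_additive (R : Type) [Ring R] (M : Type) [AddCommGroup M] [Module Rᵐᵒᵖ M] :
    (btF R M).Additive where
  map_add := by
    intro N N' f g
    have h : BT.map (M := M) R (f + g).hom
        = BT.map R f.hom + BT.map R g.hom :=
      BT.hom_ext fun m n => by
        rw [show BT.map R (f + g).hom (BT.mk R m n)
            = BT.mk R m (f n + g n) from rfl, BT.mk_add_right]
        rfl
    ext x
    show BT.map (M := M) R (f + g).hom x
      = BT.map R f.hom x + BT.map R g.hom x
    rw [h]; rfl

/-- `Tor_i^R(M, N)` for a right `R`-module `M` and a left `R`-module `N`,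
computed as the `i`-th left derived functor of `M ⊗_R -`. -/
def TorGrp (R : Type) [Ring R] (M : Type) [AddCommGroup M] [Module Rᵐᵒᵖ M]
    (N : Type) [AddCommGroup N] [Module R N] (i : ℕ) : Type :=
  ((btF R M).leftDerived i).obj (ModuleCat.of R N)

instance (R : Type) [Ring R] (M : Type) [AddCommGroup M] [Module Rᵐᵒᵖ M]
    (N : Type) [AddCommGroup N] [Module R N] (i : ℕ) : AddCommGroup (TorGrp R M N i) :=
  inferInstanceAs (AddCommGroup ↑(((btF R M).leftDerived i).obj (ModuleCat.of R N)))

/-- `Ext^i_R(A, B)`, computed by deriving `Hom_R(-, B)` using projective resolutions. -/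
def ExtGrp (R : Type) [Ring R] (A : Type) [AddCommGroup A] [Module R A]
    (B : Type) [AddCommGroup B] [Module R B] (i : ℕ) : Type :=
  ((Ext ℤ (ModuleCat.{0} R) i).obj (Opposite.op (ModuleCat.of R A))).obj (ModuleCat.of R B)

instance (R : Type) [Ring R] (A : Type) [AddCommGroup A] [Module R A]
    (B : Type) [AddCommGroup B] [Module R B] (i : ℕ) : AddCommGroup (ExtGrp R A B i) :=
  inferInstanceAs (AddCommGroup
    ↑(((Ext ℤ (ModuleCat.{0} R) i).obj (Opposite.op (ModuleCat.of R A))).obj (ModuleCat.of R B)))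

end TorExt

end

noncomputable section
section Semidualizing
variable (R S : Type) [Ring R] [Ring S]
variable (C : Type) [AddCommGroup C] [Module S C] [Module Rᵐᵒᵖ C]
  [SMulCommClass S Rᵐᵒᵖ C] [SMulCommClass Rᵐᵒᵖ S C]

/-- The natural map `A → Hom_S(C, C ⊗_R A)`. -/
def muR (A : Type) [AddCommGroup A] [Module R A] : A → (C →ₗ[S] BT R C A) :=
  fun a =>
  { toFun := fun c => BT.mk R c a
    map_add' := fun c c' => BT.mk_add_left c c' a
    map_smul' := fun s c => (BT.smul_mk S s c a).symm }

/-- The auxiliary evaluation on the plain tensor product. -/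
def nuSAux (X : Type) [AddCommGroup X] [Module S X] :
    TensorProduct ℤ C (C →ₗ[S] X) →ₗ[ℤ] X :=
  TensorProduct.lift (LinearMap.mk₂ ℤ (fun c (f : C →ₗ[S] X) => f c)
    (fun c c' f => map_add f c c')
    (fun z c f => map_zsmul f z c)
    (fun c f g => rfl)
    (fun z c f => rfl))

/-- The natural evaluation map `C ⊗_R Hom_S(C, X) → X`. -/
def nuS (X : Type) [AddCommGroup X] [Module S X] : BT R C (C →ₗ[S] X) → X :=
  fun x => Submodule.liftQ (btRel R C (C →ₗ[S] X)) (nuSAux S C X) (by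
    rw [btRel, Submodule.span_le]
    rintro y ⟨c, r, f, rfl⟩
    simp only [SetLike.mem_coe, LinearMap.mem_ker, map_sub]
    have h1 : nuSAux S C X ((op r • c) ⊗ₜ[ℤ] f) = f (op r • c) := rfl
    have h2 : nuSAux S C X (c ⊗ₜ[ℤ] (r • f)) = f (op r • c) := rfl
    rw [h1, h2, sub_self]) x

/-- The natural map `Y → Hom_{Rᵒᵖ}(C, Y ⊗_S C)`. -/
def muOp (Y : Type) [AddCommGroup Y] [Module Sᵐᵒᵖ Y] : Y → (C →ₗ[Rᵐᵒᵖ] BT S Y C) :=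
  fun y =>
  { toFun := fun c => BT.mk S y c
    map_add' := fun c c' => BT.mk_add_right y c c'
    map_smul' := fun r c => (BT.smul_mk_right Rᵐᵒᵖ r y c).symm }

/-- The auxiliary evaluation on the plain tensor product, opposite side. -/
def nuOpAux (B : Type) [AddCommGroup B] [Module Rᵐᵒᵖ B] :
    TensorProduct ℤ (C →ₗ[Rᵐᵒᵖ] B) C →ₗ[ℤ] B :=
  TensorProduct.lift (LinearMap.mk₂ ℤ (fun (f : C →ₗ[Rᵐᵒᵖ] B) c => f c)
    (fun f g c => rfl)
    (fun z f c => rfl)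
    (fun f c c' => map_add f c c')
    (fun z f c => map_zsmul f z c))

/-- The natural evaluation map `Hom_{Rᵒᵖ}(C, B) ⊗_S C → B`. -/
def nuOp (B : Type) [AddCommGroup B] [Module Rᵐᵒᵖ B] : BT S (C →ₗ[Rᵐᵒᵖ] B) C → B :=
  fun x => Submodule.liftQ (btRel S (C →ₗ[Rᵐᵒᵖ] B) C) (nuOpAux R C B) (by
    rw [btRel, Submodule.span_le]
    rintro y ⟨f, s, c, rfl⟩
    simp only [SetLike.mem_coe, LinearMap.mem_ker, map_sub]
    have h1 : nuOpAux R C B ((op s • f) ⊗ₜ[ℤ] c) = f (s • c) := rfl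
    have h2 : nuOpAux R C B (f ⊗ₜ[ℤ] (s • c)) = f (s • c) := rfl
    rw [h1, h2, sub_self]) x

/-- The Auslander class `A_C(R)`. -/
def AuslanderR (A : Type) [AddCommGroup A] [Module R A] : Prop :=
  (∀ i : ℕ, 1 ≤ i → Subsingleton (TorGrp R C A i)) ∧
  (∀ i : ℕ, 1 ≤ i → Subsingleton (ExtGrp S C (BT R C A) i)) ∧
  Function.Bijective (muR R S C A)

/-- The Bass class `B_C(S)`. -/
def BassS (X : Type) [AddCommGroup X] [Module S X] : Prop :=
  (∀ i : ℕ, 1 ≤ i → Subsingleton (ExtGrp S C X i)) ∧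
  (∀ i : ℕ, 1 ≤ i → Subsingleton (TorGrp R C (C →ₗ[S] X) i)) ∧
  Function.Bijective (nuS R S C X)

/-- The Auslander class `A_C(Sᵒᵖ)`. -/
def AuslanderOp (Y : Type) [AddCommGroup Y] [Module Sᵐᵒᵖ Y] : Prop :=
  (∀ i : ℕ, 1 ≤ i → Subsingleton (TorGrp S Y C i)) ∧
  (∀ i : ℕ, 1 ≤ i → Subsingleton (ExtGrp Rᵐᵒᵖ C (BT S Y C) i)) ∧
  Function.Bijective (muOp R S C Y)

/-- The Bass class `B_C(Rᵒᵖ)`. -/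
def BassOp (B : Type) [AddCommGroup B] [Module Rᵐᵒᵖ B] : Prop :=
  (∀ i : ℕ, 1 ≤ i → Subsingleton (ExtGrp Rᵐᵒᵖ C B i)) ∧
  (∀ i : ℕ, 1 ≤ i → Subsingleton (TorGrp S (C →ₗ[Rᵐᵒᵖ] B) C i)) ∧
  Function.Bijective (nuOp R S C B)

/-- `M` is of type `FP∞`: it admits a projective resolution by finitely generated
free modules. -/
def IsFPInfty (A : Type) [Ring A] (M : Type) [AddCommGroup M] [Module A M] : Prop :=
  ∃ P : CategoryTheory.ProjectiveResolution (ModuleCat.of A M),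
    ∀ n : ℕ, Module.Finite A (P.complex.X n) ∧ Module.Free A (P.complex.X n)

/-- The homothety map `S → Hom_{Rᵒᵖ}(C, C)`. -/
def homothetyS : S → (C →ₗ[Rᵐᵒᵖ] C) := fun s =>
  { toFun := fun c => s • c
    map_add' := fun c c' => smul_add s c c'
    map_smul' := fun r c => by
      show s • (r • c) = r • (s • c)
      rw [smul_comm] }

/-- The homothety map `R → Hom_S(C, C)`. -/
def homothetyR : R → (C →ₗ[S] C) := fun r =>
  { toFun := fun c => op r • c
    map_add' := fun c c' => smul_add (op r) c c'
    map_smul' := fun s c => by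
      show op r • (s • c) = s • (op r • c)
      rw [smul_comm] }

/-- `C` is a semidualizing `(S,R)`-bimodule. -/
structure IsSemidualizing : Prop where
  fp_left : IsFPInfty S C
  fp_right : IsFPInfty Rᵐᵒᵖ C
  homothety_S : Function.Bijective (homothetyS R S C)
  homothety_R : Function.Bijective (homothetyR R S C)
  ext_S : ∀ i : ℕ, 1 ≤ i → Subsingleton (ExtGrp S C C i)
  ext_R : ∀ i : ℕ, 1 ≤ i → Subsingleton (ExtGrp Rᵐᵒᵖ C C i)

/-- `C` is faithfully semidualizing. -/
structure IsFaithfullySemidualizing extends IsSemidualizing R S C : Prop where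
  faithful_S : ∀ (X : Type) [AddCommGroup X] [Module S X],
    (∀ f : C →ₗ[S] X, f = 0) → Subsingleton X
  faithful_R : ∀ (Y : Type) [AddCommGroup Y] [Module Rᵐᵒᵖ Y],
    (∀ f : C →ₗ[Rᵐᵒᵖ] Y, f = 0) → Subsingleton Y

end Semidualizing

end

noncomputable section
section DualityPairs

/-- A class of (bundled) left `R`-modules. -/
abbrev ModClass (R : Type) [Ring R] := Set (ModuleCat.{0} R)

/-- `(M, N)` is a duality pair over `R`: a left `R`-module lies in `M` iff its
character module lies in `N`, and `N` is closed under direct summands and finite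
direct sums. -/
structure IsDualityPair (R : Type) [Ring R] (M : ModClass R) (N : ModClass Rᵐᵒᵖ) : Prop where
  char_mem : ∀ X : ModuleCat.{0} R,
    X ∈ M ↔ ModuleCat.of Rᵐᵒᵖ (CharacterModule X) ∈ N
  summand_closed : ∀ (X Y : ModuleCat.{0} Rᵐᵒᵖ) (i : Y →ₗ[Rᵐᵒᵖ] X) (p : X →ₗ[Rᵐᵒᵖ] Y),
    p.comp i = LinearMap.id → X ∈ N → Y ∈ N
  finsum_closed : ∀ X Y : ModuleCat.{0} Rᵐᵒᵖ,
    X ∈ N → Y ∈ N → ModuleCat.of Rᵐᵒᵖ (↥X × ↥Y) ∈ N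

/-- `(N, M)` is a duality pair over `Rᵒᵖ`: a right `R`-module lies in `N` iff its
character module lies in `M`, and `M` is closed under direct summands and finite
direct sums.  A duality pair `(M, N)` with this additional property is *symmetric*. -/
structure IsDualityPairOp (R : Type) [Ring R] (N : ModClass Rᵐᵒᵖ) (M : ModClass R) : Prop where
  char_mem : ∀ Y : ModuleCat.{0} Rᵐᵒᵖ,
    Y ∈ N ↔ ModuleCat.of R (CharacterModule Y) ∈ M
  summand_closed : ∀ (X Y : ModuleCat.{0} R) (i : Y →ₗ[R] X) (p : X →ₗ[R] Y),
    p.comp i = LinearMap.id → X ∈ M → Y ∈ M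
  finsum_closed : ∀ X Y : ModuleCat.{0} R,
    X ∈ M → Y ∈ M → ModuleCat.of R (↥X × ↥Y) ∈ M

/-- A monomorphism of left `R`-modules is pure if it stays injective after applying
`M ⊗_R -` for every right `R`-module `M`. -/
def IsPureMono (R : Type) [Ring R] {A B : Type} [AddCommGroup A] [Module R A]
    [AddCommGroup B] [Module R B] (f : A →ₗ[R] B) : Prop :=
  Function.Injective f ∧
  ∀ (M : Type) [AddCommGroup M] [Module Rᵐᵒᵖ M],
    Function.Injective (BT.map (M := M) R f)

end DualityPairs

section Induced
variable (R S : Type) [Ring R] [Ring S]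
variable (C : Type) [AddCommGroup C] [Module S C] [Module Rᵐᵒᵖ C]
  [SMulCommClass S Rᵐᵒᵖ C] [SMulCommClass Rᵐᵒᵖ S C]

/-- The induced class `M^C(S)` of left `S`-modules isomorphic to `C ⊗_R A`
with `A` in the Auslander class and in `M`. -/
def inducedMC (Mcl : ModClass R) : ModClass S :=
  {X : ModuleCat.{0} S | ∃ A : ModuleCat.{0} R,
    AuslanderR R S C A ∧ A ∈ Mcl ∧ Nonempty (↥X ≃ₗ[S] BT R C ↥A)}

/-- The induced class `N^C(Sᵒᵖ)` of right `S`-modules isomorphic to `Hom_{Rᵒᵖ}(C, B)`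
with `B` in the Bass class and in `N`. -/
def inducedNC (Ncl : ModClass Rᵐᵒᵖ) : ModClass Sᵐᵒᵖ :=
  {Y : ModuleCat.{0} Sᵐᵒᵖ | ∃ B : ModuleCat.{0} Rᵐᵒᵖ,
    BassOp R S C ↥B ∧ B ∈ Ncl ∧ Nonempty (↥Y ≃ₗ[Sᵐᵒᵖ] (C →ₗ[Rᵐᵒᵖ] ↥B))}

end Induced

section Resolutions
variable (R : Type) [Ring R]

/-- `ResLen R cl n X` : `X` admits a resolution of length `n` by modules in `cl`. -/
def ResLen (cl : ModClass R) : ℕ → ModuleCat.{0} R → Prop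
  | 0, X => X ∈ cl
  | n+1, X => ∃ (Y : ModuleCat.{0} R) (f : ↥Y →ₗ[R] ↥X), Y ∈ cl ∧ Function.Surjective f ∧
      ResLen cl n (ModuleCat.of R (LinearMap.ker f))

/-- `X` has resolution dimension at most `n` with respect to `cl`. -/
def ResDimLE (cl : ModClass R) (n : ℕ) (X : ModuleCat.{0} R) : Prop :=
  ∃ m ≤ n, ResLen R cl m X

/-- `CoresLen R cl n X` : `X` admits a coresolution of length `n` by modules in `cl`. -/
def CoresLen (cl : ModClass R) : ℕ → ModuleCat.{0} R → Prop
  | 0, X => X ∈ cl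
  | n+1, X => ∃ (Y : ModuleCat.{0} R) (f : ↥X →ₗ[R] ↥Y), Y ∈ cl ∧ Function.Injective f ∧
      CoresLen cl n (ModuleCat.of R (↥Y ⧸ LinearMap.range f))

/-- `X` has coresolution dimension at most `n` with respect to `cl`. -/
def CoresDimLE (cl : ModClass R) (n : ℕ) (X : ModuleCat.{0} R) : Prop :=
  ∃ m ≤ n, CoresLen R cl m X

end Resolutions

section Gorenstein
open CategoryTheory
variable (R : Type) [Ring R]

/-- Exactness of a cochain complex of modules at every spot. -/
def AcyclicComplex (K : CochainComplex (ModuleCat.{0} R) ℤ) : Prop :=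
  ∀ n : ℤ, K.ExactAt n

/-- `X` is `(Z, Y)`-Gorenstein injective: `X` is a cycle of an exact complex with
components in `Y` which stays exact under `Hom(Z₀, -)` for every `Z₀ ∈ Z`. -/
def GorInj (Z Y : ModClass R) (X : Type) [AddCommGroup X] [Module R X] : Prop :=
  ∃ K : CochainComplex (ModuleCat.{0} R) ℤ,
    AcyclicComplex R K ∧
    (∀ n : ℤ, K.X n ∈ Y) ∧
    (∀ Z₀ : ModuleCat.{0} R, Z₀ ∈ Z → ∀ n : ℤ,
      ((((CategoryTheory.preadditiveCoyoneda.obj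
        (Opposite.op Z₀)).mapHomologicalComplex _).obj K).ExactAt n)) ∧
    Nonempty (X ≃ₗ[R] LinearMap.ker ((K.d 0 1).hom : ↥(K.X 0) →ₗ[R] ↥(K.X 1)))

end Gorenstein

section GorensteinFlat
open CategoryTheory
variable (S : Type) [Ring S]

/-- `X` is Gorenstein `(Xc, Yc)`-flat : `X` is a cycle of an exact complex with
components in `Xc` which stays exact under `Y₀ ⊗_S -` for every `Y₀ ∈ Yc`. -/
def GorFlat (Xc : ModClass S) (Yc : ModClass Sᵐᵒᵖ) (X : Type) [AddCommGroup X]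
    [Module S X] : Prop :=
  ∃ K : CochainComplex (ModuleCat.{0} S) ℤ,
    AcyclicComplex S K ∧
    (∀ n : ℤ, K.X n ∈ Xc) ∧
    (∀ Y₀ : ModuleCat.{0} Sᵐᵒᵖ, Y₀ ∈ Yc → ∀ n : ℤ,
      ((((btF S ↥Y₀).mapHomologicalComplex _).obj K).ExactAt n)) ∧
    Nonempty (X ≃ₗ[S] LinearMap.ker ((K.d 0 1).hom : ↥(K.X 0) →ₗ[S] ↥(K.X 1)))

end GorensteinFlat

end

noncomputable section
/-- `cl` is closed under extensions. -/
def ExtClosed (R : Type) [Ring R] (cl : ModClass R) : Prop :=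
  ∀ (A B D : Type) [AddCommGroup A] [Module R A] [AddCommGroup B] [Module R B]
    [AddCommGroup D] [Module R D] (f : A →ₗ[R] B) (g : B →ₗ[R] D),
    Function.Injective f → Function.Surjective g →
    LinearMap.range f = LinearMap.ker g →
    ModuleCat.of R A ∈ cl → ModuleCat.of R D ∈ cl → ModuleCat.of R B ∈ cl
end

noncomputable section
/-- Functoriality of the balanced tensor product in the left variable. -/
def BT.mapLeft (R : Type) [Ring R] {M M' : Type} [AddCommGroup M] [Module Rᵐᵒᵖ M]
    [AddCommGroup M'] [Module Rᵐᵒᵖ M'] {N : Type} [AddCommGroup N] [Module R N]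
    (g : M →ₗ[Rᵐᵒᵖ] M') : BT R M N →ₗ[ℤ] BT R M' N := by
  refine Submodule.mapQ _ _
    (TensorProduct.map g.toAddMonoidHom.toIntLinearMap LinearMap.id) ?_
  rw [btRel, Submodule.span_le]
  rintro x ⟨m, r, n, rfl⟩
  simp only [SetLike.mem_coe, Submodule.mem_comap, map_sub, TensorProduct.map_tmul,
    LinearMap.id_apply, AddMonoidHom.coe_toIntLinearMap, LinearMap.toAddMonoidHom_coe,
    map_smul]
  refine Submodule.subset_span ⟨g m, r, n, ?_⟩
  erw [map_sub, TensorProduct.map_tmul, TensorProduct.map_tmul]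
  simp

/-- A left module `F` over a (possibly noncommutative) ring is flat if `- ⊗_R F`
preserves injectivity of maps of right `R`-modules. -/
def IsFlatModule (R : Type) [Ring R] (F : Type) [AddCommGroup F] [Module R F] : Prop :=
  ∀ (M M' : Type) [AddCommGroup M] [Module Rᵐᵒᵖ M] [AddCommGroup M'] [Module Rᵐᵒᵖ M']
    (g : M →ₗ[Rᵐᵒᵖ] M'), Function.Injective g →
    Function.Injective (BT.mapLeft (N := F) R g)
end

/-! A class `M` in a duality pair `(M, N)` is closed under pure quotients: when
`0 → K → B → D → 0` is pure, the dual sequence `0 → D⁺ → B⁺ → K⁺ → 0` splits, so `D⁺` is a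
direct summand of `B⁺ ∈ N` and hence `D ∈ M`. Purity is used in the strong form of local
splitting: every finite subset of `K` is fixed by some retraction `B → K`.

A direct limit is such a quotient of the direct sum of its terms: finitely many relations all
die at one stage `j`, and subtracting the push to `j` retracts onto them. A flat module `F` is
such a quotient of the free module `R^(F)` by the equational criterion for flatness. Free modules
lie in `M` because `M` contains `R` and is closed under coproducts. -/

section

variable {R : Type} [Ring R]

namespace BT

variable {M W N X : Type} [AddCommGroup M] [Module Rᵐᵒᵖ M] [AddCommGroup W] [Module Rᵐᵒᵖ W]
  [AddCommGroup N] [Module R N] [AddCommGroup X]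

def lift (f : M →+ N →+ X) (hf : ∀ m (r : R) n, f (op r • m) n = f m (r • n)) :
    BT R M N →ₗ[ℤ] X :=
  (btRel R M N).liftQ (TensorProduct.liftAddHom f fun z m n => by simp).toIntLinearMap <| by
    rw [btRel, Submodule.span_le]
    rintro _ ⟨m, r, n, rfl⟩
    simp [hf]

variable (R M N) in
def mkAddHom : M →+ N →+ BT R M N :=
  AddMonoidHom.mk' (fun m => AddMonoidHom.mk' (BT.mk R m) (BT.mk_add_right m)) fun m m' =>
    AddMonoidHom.ext (BT.mk_add_left m m')

@[simp]
theorem mkAddHom_apply (m : M) (n : N) : mkAddHom R M N m n = BT.mk R m n := rfl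

theorem mk_sum_left {α : Type} (s : Finset α) (m : α → M) (n : N) :
    BT.mk R (∑ a ∈ s, m a) n = ∑ a ∈ s, BT.mk R (m a) n := by
  simp [← mkAddHom_apply, map_sum]

theorem mk_sum_right {α : Type} (s : Finset α) (m : M) (n : α → N) :
    BT.mk R m (∑ a ∈ s, n a) = ∑ a ∈ s, BT.mk R m (n a) :=
  map_sum (mkAddHom R M N m) n s

theorem exists_fin_sum (t : BT R M N) :
    ∃ (q : ℕ) (u : Fin q → M) (y : Fin q → N), t = ∑ p, BT.mk R (u p) (y p) := by
  induction t using BT.ind with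
  | h0 => exact ⟨0, Fin.elim0, Fin.elim0, by simp⟩
  | hmk m n => exact ⟨1, fun _ => m, fun _ => n, by simp⟩
  | hadd x y hx hy =>
    obtain ⟨q, u, y, rfl⟩ := hx
    obtain ⟨q', u', y', rfl⟩ := hy
    exact ⟨q + q', Fin.append u u', Fin.append y y', by simp [Fin.sum_univ_add]⟩

theorem exists_finset_map_eq_self (t : BT R M N) :
    ∃ s : Finset N, ∀ g : N →ₗ[R] N, (∀ n ∈ s, g n = n) → BT.map R g t = t := by
  classical
  induction t using BT.ind with
  | h0 => exact ⟨∅, fun g _ => map_zero _⟩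
  | hmk m n => exact ⟨{n}, fun g hg => by rw [BT.map_mk, hg n (Finset.mem_singleton_self n)]⟩
  | hadd x y hx hy =>
    obtain ⟨s, hs⟩ := hx
    obtain ⟨s', hs'⟩ := hy
    refine ⟨s ∪ s', fun g hg => ?_⟩
    rw [map_add, hs g fun n hn => hg n (Finset.mem_union_left _ hn),
      hs' g fun n hn => hg n (Finset.mem_union_right _ hn)]

theorem map_comp {N' N'' : Type} [AddCommGroup N'] [Module R N'] [AddCommGroup N'']
    [Module R N''] (f : N →ₗ[R] N') (g : N' →ₗ[R] N'') :
    BT.map (M := M) R (g.comp f) = (BT.map R g).comp (BT.map R f) :=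
  BT.hom_ext fun _ _ => rfl

theorem mapLeft_mk (g : M →ₗ[Rᵐᵒᵖ] W) (m : M) (n : N) :
    BT.mapLeft R g (BT.mk R m n) = BT.mk R (g m) n := rfl

theorem mapLeft_comp {W' : Type} [AddCommGroup W'] [Module Rᵐᵒᵖ W'] (f : M →ₗ[Rᵐᵒᵖ] W)
    (g : W →ₗ[Rᵐᵒᵖ] W') :
    BT.mapLeft (N := N) R (g.comp f) = (BT.mapLeft R g).comp (BT.mapLeft R f) :=
  BT.hom_ext fun _ _ => rfl

theorem mem_range_mapLeft_subtype {W' : Submodule Rᵐᵒᵖ W} {t : BT R W N}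
    (ht : BT.mapLeft R W'.mkQ t = 0) :
    t ∈ LinearMap.range (BT.mapLeft (N := N) R W'.subtype) := by
  set Q := LinearMap.range (BT.mapLeft (N := N) R W'.subtype)
  have hker : W'.mkQ.toAddMonoidHom.ker ≤ ((mkAddHom R W N).compr₂ Q.mkQ.toAddMonoidHom).ker :=
    fun w hw => AddMonoidHom.mem_ker.mpr <| AddMonoidHom.ext fun n =>
      (Submodule.Quotient.mk_eq_zero Q).mpr
        ⟨BT.mk R (⟨w, (Submodule.Quotient.mk_eq_zero W').mp hw⟩ : W') n, rfl⟩
  let g := W'.mkQ.toAddMonoidHom.liftOfSurjective W'.mkQ_surjective ⟨_, hker⟩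
  have hg : ∀ w n, g (W'.mkQ w) n = Q.mkQ (BT.mk R w n) := fun w n =>
    DFunLike.congr_fun (W'.mkQ.toAddMonoidHom.liftOfRightInverse_comp_apply _
      (Function.rightInverse_surjInv W'.mkQ_surjective) ⟨_, hker⟩ w) n
  have hbal : ∀ v (r : R) n, g (op r • v) n = g v (r • n) := fun v r n => by
    obtain ⟨w, rfl⟩ := W'.mkQ_surjective v
    rw [← map_smul, hg, hg, BT.mk_rel]
  have hσ : (BT.lift g hbal).comp (BT.mapLeft R W'.mkQ) = Q.mkQ :=
    BT.hom_ext fun w n => hg w n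
  rw [← Submodule.Quotient.mk_eq_zero Q, ← Submodule.mkQ_apply, ← hσ, LinearMap.comp_apply, ht,
    map_zero]

theorem mk_pi {ι : Type} [Fintype ι] [DecidableEq ι] (v : ι → R) (n : N) :
    BT.mk R v n = ∑ l, BT.mk R (Pi.single l (1 : R)) (v l • n) := by
  conv_lhs => rw [← Finset.univ_sum_single v]
  rw [mk_sum_left]
  refine Finset.sum_congr rfl fun l _ => ?_
  rw [← BT.mk_rel]
  congr 1
  ext l'
  rcases eq_or_ne l' l with rfl | h <;> simp [*]

def coord {ι : Type} (m : ι) : BT R (ι → R) N →ₗ[ℤ] N :=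
  BT.lift ((smulAddHom R N).comp (Pi.evalAddMonoidHom (fun _ => R) m)) fun v r n => by
    simp [mul_smul]

@[simp]
theorem coord_mk {ι : Type} (m : ι) (v : ι → R) (n : N) : coord m (BT.mk R v n) = v m • n :=
  rfl

end BT

def IsLocallySplit {S K B : Type} [Semiring S] [AddCommMonoid K] [Module S K] [AddCommMonoid B]
    [Module S B] (i : K →ₗ[S] B) : Prop :=
  ∀ s : Finset K, ∃ ρ : B →ₗ[S] K, ∀ k ∈ s, ρ (i k) = k

theorem IsLocallySplit.injective_btMap {K B : Type} [AddCommGroup K] [Module R K]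
    [AddCommGroup B] [Module R B] {i : K →ₗ[R] B} (hi : IsLocallySplit i)
    (X : Type) [AddCommGroup X] [Module Rᵐᵒᵖ X] : Function.Injective (BT.map (M := X) R i) := by
  refine (injective_iff_map_eq_zero _).mpr fun t ht => ?_
  obtain ⟨s, hs⟩ := BT.exists_finset_map_eq_self t
  obtain ⟨ρ, hρ⟩ := hi s
  rw [← hs (ρ.comp i) hρ, BT.map_comp, LinearMap.comp_apply, ht, map_zero]

def charDual {A B : Type} [AddCommGroup A] [Module R A] [AddCommGroup B] [Module R B]
    (f : A →ₗ[R] B) : CharacterModule B →ₗ[Rᵐᵒᵖ] CharacterModule A where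
  toFun φ := (φ : B →+ _).comp f.toAddMonoidHom
  map_add' _ _ := rfl
  map_smul' r φ := DFunLike.ext _ _ fun a => congrArg φ (f.map_smul r.unop a).symm

@[simp]
theorem charDual_apply {A B : Type} [AddCommGroup A] [Module R A] [AddCommGroup B] [Module R B]
    (f : A →ₗ[R] B) (φ : CharacterModule B) (a : A) : charDual f φ a = φ (f a) := rfl

theorem charDual_injective_of_surjective {A B : Type} [AddCommGroup A] [Module R A]
    [AddCommGroup B] [Module R B] {f : A →ₗ[R] B} (hf : Function.Surjective f) :
    Function.Injective (charDual f) := fun φ ψ h => DFunLike.ext _ _ fun b => by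
  obtain ⟨a, rfl⟩ := hf b
  exact DFunLike.congr_fun h a

theorem ker_charDual_subtype_le_range {B D : Type} [AddCommGroup B] [Module R B]
    [AddCommGroup D] [Module R D] {π : B →ₗ[R] D} (hπ : Function.Surjective π) :
    LinearMap.ker (charDual (LinearMap.ker π).subtype) ≤ LinearMap.range (charDual π) := by
  intro φ hφ
  have hker : π.toAddMonoidHom.ker ≤ (φ : B →+ _).ker := fun b hb =>
    AddMonoidHom.mem_ker.mpr <|
      DFunLike.congr_fun (LinearMap.mem_ker.mp hφ) ⟨b, AddMonoidHom.mem_ker.mp hb⟩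
  exact ⟨π.toAddMonoidHom.liftOfSurjective hπ ⟨φ, hker⟩, DFunLike.ext _ _ <|
    π.toAddMonoidHom.liftOfRightInverse_comp_apply _ (Function.rightInverse_surjInv hπ) ⟨φ, hker⟩⟩

/-- The retraction is `φ ↦ φ - s (φ|_K)`, which vanishes on `K` and hence descends to `D`. -/
theorem exists_retraction_charDual {B D : Type} [AddCommGroup B] [Module R B]
    [AddCommGroup D] [Module R D] {π : B →ₗ[R] D} (hπ : Function.Surjective π)
    (s : CharacterModule (LinearMap.ker π) →ₗ[Rᵐᵒᵖ] CharacterModule B)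
    (hs : (charDual (LinearMap.ker π).subtype).comp s = LinearMap.id) :
    ∃ p : CharacterModule B →ₗ[Rᵐᵒᵖ] CharacterModule D, p.comp (charDual π) = LinearMap.id := by
  set ι := charDual (LinearMap.ker π).subtype
  have hιπ : ι.comp (charDual π) = 0 :=
    LinearMap.ext fun ψ => DFunLike.ext _ _ fun (k : LinearMap.ker π) =>
      show ψ (π k) = 0 by rw [LinearMap.mem_ker.mp k.2, map_zero]
  set T : CharacterModule B →ₗ[Rᵐᵒᵖ] CharacterModule B := LinearMap.id - s.comp ι
  have hT : ι.comp T = 0 := by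
    rw [LinearMap.comp_sub, ← LinearMap.comp_assoc, hs, LinearMap.id_comp, LinearMap.comp_id,
      sub_self]
  have hTπ : T.comp (charDual π) = charDual π := by
    rw [LinearMap.sub_comp, LinearMap.comp_assoc, hιπ, LinearMap.comp_zero, sub_zero,
      LinearMap.id_comp]
  have hrange : ∀ φ, T φ ∈ LinearMap.range (charDual π) := fun φ =>
    ker_charDual_subtype_le_range hπ (LinearMap.congr_fun hT φ)
  let e := LinearEquiv.ofInjective _ (charDual_injective_of_surjective hπ)
  refine ⟨e.symm.toLinearMap.comp (T.codRestrict _ hrange), ?_⟩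
  refine LinearMap.ext fun ψ => e.injective ?_
  ext1
  simpa [e] using LinearMap.congr_fun hTπ ψ

def charEval (K : Type) [AddCommGroup K] [Module R K] :
    BT R (CharacterModule K) K →ₗ[ℤ] AddCircle (1 : ℚ) :=
  BT.lift (AddMonoidHom.id (CharacterModule K)) fun _ _ _ => rfl

def charCurry {X B : Type} [AddCommGroup X] [Module Rᵐᵒᵖ X] [AddCommGroup B] [Module R B]
    (χ : BT R X B →ₗ[ℤ] AddCircle (1 : ℚ)) : X →ₗ[Rᵐᵒᵖ] CharacterModule B where
  toFun x := χ.toAddMonoidHom.comp (BT.mkAddHom R X B x)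
  map_add' x x' := DFunLike.ext _ _ fun b =>
    show χ (BT.mk R (x + x') b) = χ (BT.mk R x b) + χ (BT.mk R x' b) by
      rw [BT.mk_add_left, map_add]
  map_smul' r x := DFunLike.ext _ _ fun b =>
    show χ (BT.mk R (r • x) b) = χ (BT.mk R x (r.unop • b)) by rw [← BT.mk_rel, op_unop]

/-- Since `ℚ/ℤ` is injective, the evaluation character of `K⁺ ⊗ K` extends along `K⁺ ⊗ i` to
`K⁺ ⊗ B`; its adjoint `K⁺ → B⁺` splits `i⁺`. -/
theorem exists_section_charDual {K B : Type} [AddCommGroup K] [Module R K]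
    [AddCommGroup B] [Module R B] (i : K →ₗ[R] B)
    (hi : Function.Injective (BT.map (M := CharacterModule K) R i)) :
    ∃ s : CharacterModule K →ₗ[Rᵐᵒᵖ] CharacterModule B, (charDual i).comp s = LinearMap.id := by
  obtain ⟨χ, hχ⟩ :=
    (Module.Baer.of_divisible (AddCircle (1 : ℚ))).extension_property _ hi (charEval K)
  exact ⟨charCurry χ, LinearMap.ext fun x => DFunLike.ext _ _ fun k =>
    LinearMap.congr_fun hχ (BT.mk R x k)⟩

namespace IsDualityPair

variable {M : ModClass R} {N : ModClass Rᵐᵒᵖ}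

theorem mem_of_retraction_charDual (hdp : IsDualityPair R M N) {B D : Type}
    [AddCommGroup B] [Module R B] [AddCommGroup D] [Module R D] (f : B →ₗ[R] D)
    (p : CharacterModule B →ₗ[Rᵐᵒᵖ] CharacterModule D) (hp : p.comp (charDual f) = LinearMap.id)
    (hB : ModuleCat.of R B ∈ M) : ModuleCat.of R D ∈ M :=
  (hdp.char_mem _).mpr <| hdp.summand_closed (.of Rᵐᵒᵖ (CharacterModule B))
    (.of Rᵐᵒᵖ (CharacterModule D)) _ _ hp ((hdp.char_mem _).mp hB)

theorem mem_of_linearEquiv (hdp : IsDualityPair R M N) {A B : Type}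
    [AddCommGroup A] [Module R A] [AddCommGroup B] [Module R B] (e : A ≃ₗ[R] B)
    (hB : ModuleCat.of R B ∈ M) : ModuleCat.of R A ∈ M :=
  hdp.mem_of_retraction_charDual e.symm.toLinearMap (charDual e.toLinearMap)
    (LinearMap.ext fun φ => DFunLike.ext _ _ fun a => by simp) hB

theorem mem_of_isLocallySplit (hdp : IsDualityPair R M N) {B D : Type}
    [AddCommGroup B] [Module R B] [AddCommGroup D] [Module R D] {π : B →ₗ[R] D}
    (hπ : Function.Surjective π) (hsplit : IsLocallySplit (LinearMap.ker π).subtype)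
    (hB : ModuleCat.of R B ∈ M) : ModuleCat.of R D ∈ M := by
  obtain ⟨s, hs⟩ := exists_section_charDual _ (hsplit.injective_btMap _)
  obtain ⟨p, hp⟩ := exists_retraction_charDual hπ s hs
  exact hdp.mem_of_retraction_charDual π p hp hB

end IsDualityPair

section DirectLimit

open DirectSum

variable {ι : Type} [DecidableEq ι] {G : ι → Type} [∀ i, AddCommGroup (G i)]
  [∀ i, Module R (G i)]

theorem DirectSum.linearMap_apply_eq_of_support [∀ i (x : G i), Decidable (x ≠ 0)] {P : Type}
    [AddCommGroup P] [Module R P] (φ ψ : (⨁ i, G i) →ₗ[R] P) (x : ⨁ i, G i)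
    (h : ∀ i ∈ x.support, ∀ y, φ (lof R ι G i y) = ψ (lof R ι G i y)) : φ x = ψ x := by
  rw [← DirectSum.sum_support_of x, map_sum, map_sum]
  exact Finset.sum_congr rfl fun i hi => h i hi (x i)

namespace Module.DirectLimit

variable [Preorder ι] (f : ∀ i j, i ≤ j → G i →ₗ[R] G j)

open Classical in
noncomputable def pushTo (j : ι) : (⨁ i, G i) →ₗ[R] G j :=
  toModule R ι (G j) fun i => if h : i ≤ j then f i j h else 0

theorem pushTo_lof {i j : ι} (h : i ≤ j) (y : G i) :
    pushTo f j (lof R ι G i y) = f i j h y := by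
  rw [pushTo, toModule_lof, dif_pos h]

variable {f}

theorem of_pushTo [∀ i (x : G i), Decidable (x ≠ 0)] {j : ι} {x : ⨁ i, G i}
    (hx : ∀ i ∈ x.support, i ≤ j) :
    of R ι G f j (pushTo f j x) = toModule R ι _ (of R ι G f) x :=
  DirectSum.linearMap_apply_eq_of_support ((of R ι G f j).comp (pushTo f j)) _ x fun i hi y => by
    rw [LinearMap.comp_apply, pushTo_lof f (hx i hi), of_f, toModule_lof]

theorem pushTo_of_le [∀ i (x : G i), Decidable (x ≠ 0)] [DirectedSystem G fun i j h => f i j h]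
    {j k : ι} (hjk : j ≤ k) {x : ⨁ i, G i} (hx : ∀ i ∈ x.support, i ≤ j) :
    pushTo f k x = f j k hjk (pushTo f j x) :=
  DirectSum.linearMap_apply_eq_of_support _ ((f j k hjk).comp (pushTo f j)) x fun i hi y => by
    rw [LinearMap.comp_apply, pushTo_lof f (hx i hi), pushTo_lof f ((hx i hi).trans hjk),
      Module.DirectedSystem.map_map f]

variable [IsDirectedOrder ι] [Nonempty ι]

theorem toModule_of_surjective : Function.Surjective (toModule R ι _ (of R ι G f)) := fun z => by
  induction z using Module.DirectLimit.induction_on with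
  | ih i x => exact ⟨lof R ι G i x, toModule_lof R i x⟩

theorem exists_pushTo_eq_zero [∀ i (x : G i), Decidable (x ≠ 0)]
    [DirectedSystem G fun i j h => f i j h] (s : Finset (⨁ i, G i))
    (hs : ∀ x ∈ s, toModule R ι _ (of R ι G f) x = 0) :
    ∃ j, ∀ x ∈ s, (∀ i ∈ x.support, i ≤ j) ∧ pushTo f j x = 0 := by
  obtain ⟨j₀, hj₀⟩ := (s.biUnion DFinsupp.support).exists_le
  have hsupp : ∀ x ∈ s, ∀ i ∈ x.support, i ≤ j₀ := fun x hx i hi =>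
    hj₀ i (Finset.mem_biUnion.mpr ⟨x, hx, hi⟩)
  have hkill : ∀ x ∈ s, ∃ j, ∃ h : j₀ ≤ j, f j₀ j h (pushTo f j₀ x) = 0 := fun x hx =>
    of.zero_exact ((of_pushTo (hsupp x hx)).trans (hs x hx))
  choose! J hJ hJx using hkill
  obtain ⟨j, hj⟩ := (insert j₀ (s.image J)).exists_le
  have hj₀j : j₀ ≤ j := hj j₀ (Finset.mem_insert_self _ _)
  refine ⟨j, fun x hx => ⟨fun i hi => (hsupp x hx i hi).trans hj₀j, ?_⟩⟩
  have hJj : J x ≤ j := hj _ (Finset.mem_insert_of_mem (Finset.mem_image_of_mem J hx))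
  calc pushTo f j x = f j₀ j hj₀j (pushTo f j₀ x) := pushTo_of_le hj₀j (hsupp x hx)
    _ = f (J x) j hJj (f j₀ (J x) (hJ x hx) (pushTo f j₀ x)) :=
      (Module.DirectedSystem.map_map f _ _ _).symm
    _ = 0 := by rw [hJx x hx, map_zero]

variable (f) in
/-- On `⨁_{i ≤ j} G i`, the map `x ↦ x - lof j (pushTo f j x)` takes values in the relations
and fixes those relations that already vanish in `G j`. -/
theorem isLocallySplit_ker_toModule [DirectedSystem G fun i j h => f i j h] :
    IsLocallySplit (LinearMap.ker (toModule R ι _ (of R ι G f))).subtype := by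
  classical
  set π := toModule R ι _ (of R ι G f)
  intro s
  obtain ⟨j, hj⟩ := exists_pushTo_eq_zero (s.image Subtype.val) fun x hx => by
    obtain ⟨k, -, rfl⟩ := Finset.mem_image.mp hx
    exact k.2
  have hmem : ∀ i (h : i ≤ j) y,
      (lof R ι G i - (lof R ι G j).comp (f i j h)) y ∈ LinearMap.ker π :=
    fun i h y => by simp [π, toModule_lof, of_f]
  let ρ : (⨁ i, G i) →ₗ[R] LinearMap.ker π := toModule R ι _ fun i =>
    if h : i ≤ j then (lof R ι G i - (lof R ι G j).comp (f i j h)).codRestrict _ (hmem i h)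
    else 0
  have hρ : ∀ x : ⨁ i, G i, (∀ i ∈ x.support, i ≤ j) →
      (ρ x : ⨁ i, G i) = x - lof R ι G j (pushTo f j x) := fun x hx => by
    have := DirectSum.linearMap_apply_eq_of_support ((LinearMap.ker π).subtype.comp ρ)
      (LinearMap.id - (lof R ι G j).comp (pushTo f j)) x fun i hi y => by
        simp [ρ, toModule_lof, dif_pos (hx i hi), pushTo_lof f (hx i hi)]
    rw [LinearMap.sub_apply] at this
    exact this
  refine ⟨ρ, fun k hk => Subtype.ext ?_⟩
  obtain ⟨hsupp, hzero⟩ := hj k (Finset.mem_image_of_mem _ hk)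
  rw [Submodule.subtype_apply, hρ k hsupp, hzero, map_zero, sub_zero]

end Module.DirectLimit

end DirectLimit

section Flat

variable {F : Type} [AddCommGroup F] [Module R F]

theorem exists_map_ker_linearCombination_id {T : Finset F} {q : ℕ} (b : Matrix T (Fin q) R)
    (y : Fin q → F) (hy : ∀ z : T, (z : F) = ∑ p, b z p • y p) :
    ∃ ρ : (F →₀ R) →ₗ[R] LinearMap.ker (Finsupp.linearCombination R (id : F → F)),
      ∀ k ∈ Finsupp.supported R R (T : Set F), (ρ k : F →₀ R) =
        k - ∑ p, (∑ z : T, k z * b z p) • Finsupp.single (y p) 1 := by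
  classical
  set π := Finsupp.linearCombination R (id : F → F)
  have hg : ∀ z : T, Finsupp.single (z : F) 1 - ∑ p, b z p • Finsupp.single (y p) 1 ∈
      LinearMap.ker π := fun z => by
    simp [π, ← hy z]
  let g : F → LinearMap.ker π := fun z => if h : z ∈ T then ⟨_, hg ⟨z, h⟩⟩ else 0
  refine ⟨Finsupp.linearCombination R g, fun k hk => ?_⟩
  calc ((Finsupp.linearCombination R g k : LinearMap.ker π) : F →₀ R)
      = ∑ z : T, k z • ((g z : LinearMap.ker π) : F →₀ R) := by
        rw [Finsupp.linearCombination_apply_of_mem_supported R hk, Submodule.coe_sum,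
          ← Finset.sum_coe_sort]
        rfl
    _ = ∑ z : T, Finsupp.single (z : F) (k z)
          - ∑ p, (∑ z : T, k z * b z p) • Finsupp.single (y p) 1 := by
        simp only [Finset.sum_smul, mul_smul]
        rw [Finset.sum_comm (s := Finset.univ (α := Fin q)), ← Finset.sum_sub_distrib]
        refine Finset.sum_congr rfl fun z _ => ?_
        simp [g, dif_pos z.2, smul_sub, Finset.smul_sum]
    _ = k - ∑ p, (∑ z : T, k z * b z p) • Finsupp.single (y p) 1 := by
        have hkT : k.support ⊆ T := Finset.coe_subset.mp ((Finsupp.mem_supported R k).mp hk)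
        rw [Finset.sum_coe_sort T fun z => Finsupp.single z (k z),
          ← Finsupp.sum_of_support_subset _ hkT _ fun _ _ => Finsupp.single_zero _,
          Finsupp.sum_single]

namespace IsFlatModule

/-- The equational criterion for flatness. The element `∑ eₘ ⊗ xₘ` of `R^ι ⊗ F` dies under `a`,
hence by flatness already in `(R^ι ⧸ ker a) ⊗ F`, so by right exactness it comes from
`ker a ⊗ F`; its coordinates give the factorization. -/
theorem exists_factorization_of_relations (hF : IsFlatModule R F) {ι κ : Type} [Fintype ι]
    [Fintype κ] (x : ι → F) (a : Matrix κ ι R) (hrel : ∀ l, ∑ m, a l m • x m = 0) :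
    ∃ (q : ℕ) (b : Matrix ι (Fin q) R) (y : Fin q → F),
      (∀ m, x m = ∑ p, b m p • y p) ∧ a * b = 0 := by
  classical
  let μ : (ι → R) →ₗ[Rᵐᵒᵖ] (κ → R) :=
    { toFun := a.mulVec, map_add' := a.mulVec_add, map_smul' := a.mulVec_smul }
  set w : BT R (ι → R) F := ∑ m, BT.mk R (Pi.single m 1) (x m)
  have hμw : BT.mapLeft R μ w = 0 := by
    simp only [w, map_sum, BT.mapLeft_mk]
    rw [Finset.sum_congr rfl fun m _ => BT.mk_pi (μ (Pi.single m 1)) (x m), Finset.sum_comm]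
    refine Finset.sum_eq_zero fun l _ => ?_
    rw [← BT.mk_sum_right]
    simpa [μ, Matrix.mulVec_single_one, BT.mk_zero_right] using
      congrArg (BT.mk R (Pi.single l 1 : κ → R)) (hrel l)
  have hw : BT.mapLeft R (LinearMap.ker μ).mkQ w = 0 := by
    refine hF _ _ ((LinearMap.ker μ).liftQ μ le_rfl)
      (LinearMap.ker_eq_bot.mp (Submodule.ker_liftQ_eq_bot _ _ _ le_rfl)) ?_
    rw [← LinearMap.comp_apply, ← BT.mapLeft_comp, Submodule.liftQ_mkQ, hμw, map_zero]
  obtain ⟨t, ht⟩ := BT.mem_range_mapLeft_subtype hw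
  obtain ⟨q, u, y, rfl⟩ := BT.exists_fin_sum t
  refine ⟨q, fun m p => (u p : ι → R) m, y, fun m => ?_, ?_⟩
  · have := congrArg (BT.coord m) ht
    simp only [w, map_sum, BT.mapLeft_mk, BT.coord_mk] at this
    simpa [Pi.single_apply] using this.symm
  · ext l p
    exact congrFun (LinearMap.mem_ker.mp (u p).2) l

theorem isLocallySplit_ker_linearCombination (hF : IsFlatModule R F) :
    IsLocallySplit (LinearMap.ker (Finsupp.linearCombination R (id : F → F))).subtype := by
  classical
  intro s
  set T := s.biUnion fun k => (k : F →₀ R).support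
  have hT : ∀ k ∈ s, (k : F →₀ R) ∈ Finsupp.supported R R (T : Set F) := fun k hk =>
    Finset.coe_subset.mpr (Finset.subset_biUnion_of_mem
      (fun k : LinearMap.ker (Finsupp.linearCombination R (id : F → F)) => (k : F →₀ R).support) hk)
  obtain ⟨q, b, y, hy, hb⟩ := hF.exists_factorization_of_relations (fun z : T => (z : F))
    (fun (k : s) (z : T) => (k : F →₀ R) z) fun k => by
      show ∑ z : T, (k : F →₀ R) z • (z : F) = 0
      rw [Finset.sum_coe_sort T fun z => (k : F →₀ R) z • z]
      exact (Finsupp.linearCombination_apply_of_mem_supported R (hT k k.2)).symm.trans k.1.2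
  obtain ⟨ρ, hρ⟩ := exists_map_ker_linearCombination_id b y hy
  refine ⟨ρ, fun k hk => Subtype.ext ?_⟩
  have hkb : ∀ p, ∑ z : T, (k : F →₀ R) z * b z p = 0 := fun p =>
    congrFun (congrFun hb ⟨k, hk⟩) p
  rw [Submodule.subtype_apply, hρ _ (hT k hk)]
  simp only [hkb, zero_smul, Finset.sum_const_zero, sub_zero]

end IsFlatModule

end Flat

end

theorem stmt7_general (R : Type) [Ring R] (M : ModClass R) (N : ModClass Rᵐᵒᵖ)
    (h : IsDualityPair R M N)
    (hcoprod : ∀ (ι : Type) (Y : ι → ModuleCat.{0} R), (∀ i, Y i ∈ M) →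
      ModuleCat.of R (DirectSum ι fun i => ↥(Y i)) ∈ M)
    (hR : ModuleCat.of R R ∈ M) :
    (∀ (ι : Type) [Preorder ι] [IsDirected ι (· ≤ ·)] [Nonempty ι] [DecidableEq ι]
      (G : ι → Type) [∀ i, AddCommGroup (G i)] [∀ i, Module R (G i)]
      (f : ∀ i j, i ≤ j → G i →ₗ[R] G j) [DirectedSystem G fun i j hij => f i j hij],
      (∀ i, ModuleCat.of R (G i) ∈ M) →
        ModuleCat.of R (Module.DirectLimit G f) ∈ M) ∧
    (∀ (F : Type) [AddCommGroup F] [Module R F],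
      IsFlatModule R F → ModuleCat.of R F ∈ M) := by
  refine ⟨fun ι _ _ _ _ G _ _ f _ hG => ?_, fun F _ _ hF => ?_⟩
  · exact h.mem_of_isLocallySplit Module.DirectLimit.toModule_of_surjective
      (Module.DirectLimit.isLocallySplit_ker_toModule f)
      (hcoprod ι (fun i => .of R (G i)) hG)
  · classical
    have hfree : ModuleCat.of R (F →₀ R) ∈ M :=
      h.mem_of_linearEquiv (finsuppLEquivDirectSum R R F) (hcoprod F _ fun _ => hR)
    exact h.mem_of_isLocallySplit (Finsupp.linearCombination_id_surjective R F)
      hF.isLocallySplit_ker_linearCombination hfree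

/-- If `(M, N)` is a perfect duality pair over `R` then `M` is closed under
direct limits, and consequently every flat left `R`-module belongs to `M`. -/
theorem stmt7 (R : Type) [Ring R] (M : ModClass R) (N : ModClass Rᵐᵒᵖ)
    (h : IsDualityPair R M N)
    (hcoprod : ∀ (ι : Type) (Y : ι → ModuleCat.{0} R), (∀ i, Y i ∈ M) →
      ModuleCat.of R (DirectSum ι fun i => ↥(Y i)) ∈ M)
    (hext : ExtClosed R M)
    (hR : ModuleCat.of R R ∈ M) :
    (∀ (ι : Type) [Preorder ι] [IsDirected ι (· ≤ ·)] [Nonempty ι] [DecidableEq ι]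
      (G : ι → Type) [∀ i, AddCommGroup (G i)] [∀ i, Module R (G i)]
      (f : ∀ i j, i ≤ j → G i →ₗ[R] G j) [DirectedSystem G fun i j hij => f i j hij],
      (∀ i, ModuleCat.of R (G i) ∈ M) →
        ModuleCat.of R (Module.DirectLimit G f) ∈ M) ∧
    (∀ (F : Type) [AddCommGroup F] [Module R F],
      IsFlatModule R F → ModuleCat.of R F ∈ M) :=
  stmt7_general R M N h hcoprod hR
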